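/- arXiv:2310.15548 — 2 statements merged into one kernel-verified Lean document; each statement's English description precedes it below -/
import Mathlib

section
/- Let σ > 0, let S ∈ ℂ^{N_t×N_t} and F ∈ ℂ^{N_sb×N_sb} be unitary matrices, let E ∈ ℂ^{N_t×N_sb}, and let W = S E Fᴴ. Let 𝒮 ⊆ {1,…,N_t} and ℱ ⊆ {1,…,N_sb} be support sets such that E(v,l) = 0 whenever exactly one of the conditions v ∈ 𝒮, l ∈ ℱ holds, and |E(v,l)| ≤ σ whenever v ∉ 𝒮 and l ∉ ℱ. Let E' be the masked coefficient matrix with E'(v,l) = E(v,l) for (v,l) ∈ 𝒮×ℱ and E'(v,l) = 0 otherwise, and let Ŵ = S E' Fᴴ. Assume every column of W has unit ℓ₂ norm and every column of Ŵ is nonzero with ℓ₂ norm at most 1. Then 1 − ρ(W, Ŵ) ≤ (2/N_sb)·(N_t − |𝒮|)·(N_sb − |ℱ|)·σ². -/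
open Matrix BigOperators

/-- Euclidean (ℓ₂) norm of the `l`-th column of a complex matrix. -/
noncomputable def colNorm {Nt Nsb : ℕ} (W : Matrix (Fin Nt) (Fin Nsb) ℂ) (l : Fin Nsb) : ℝ :=
  Real.sqrt (∑ v, Complex.normSq (W v l))

/-- Hermitian inner product `W(:,l)ᴴ W'(:,l)` of the `l`-th columns. -/
noncomputable def colInner {Nt Nsb : ℕ} (W W' : Matrix (Fin Nt) (Fin Nsb) ℂ) (l : Fin Nsb) : ℂ :=
  ∑ v, (starRingEnd ℂ) (W v l) * (W' v l)

/-- Squared generalized cosine similarity (SGCS). -/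
noncomputable def sgcs {Nt Nsb : ℕ} (W W' : Matrix (Fin Nt) (Fin Nsb) ℂ) : ℝ :=
  (1 / (Nsb : ℝ)) *
    ∑ l, (‖colInner W W' l‖ / (colNorm W l * colNorm W' l)) ^ 2

open Finset

/-! Per column, `1 - cos² ≤ 1 - |⟨w, ŵ⟩|² ≤ 2 (1 - Re ⟨w, ŵ⟩)` because both columns have norm
at most one. Summing over the columns, the unitary factors drop out of
`∑ₗ Re ⟨w_l, w_l - ŵ_l⟩ = Re tr (Wᴴ (W - Ŵ)) = Re tr (Eᴴ (E - E'))`, and `E - E'` is the part of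
`E` on `𝒮ᶜ × ℱᶜ`, whose energy is at most `|𝒮ᶜ| |ℱᶜ| σ²`. -/

theorem Matrix.trace_conjTranspose_mul_of_isometry_sandwich
    {R m n m' n' : Type*} [CommSemiring R] [StarRing R]
    [Fintype m] [Fintype n] [Fintype m'] [Fintype n'] [DecidableEq m] [DecidableEq n]
    {S : Matrix m' m R} {F : Matrix n' n R} (hS : Sᴴ * S = 1) (hF : Fᴴ * F = 1)
    (A B : Matrix m n R) :
    trace ((S * A * Fᴴ)ᴴ * (S * B * Fᴴ)) = trace (Aᴴ * B) := by
  have hSS : (S * A * Fᴴ)ᴴ * (S * B * Fᴴ) = F * (Aᴴ * B) * Fᴴ := by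
    simp only [conjTranspose_mul, conjTranspose_conjTranspose, Matrix.mul_assoc]
    rw [← Matrix.mul_assoc Sᴴ, hS, Matrix.one_mul]
  rw [hSS, trace_mul_comm, ← Matrix.mul_assoc, hF, Matrix.one_mul]

theorem one_sub_sq_norm_inner_div_le {𝕜 E : Type*} [RCLike 𝕜] [SeminormedAddCommGroup E]
    [InnerProductSpace 𝕜 E] {x y : E} (hx : ‖x‖ ≤ 1) (hy : ‖y‖ ≤ 1) :
    1 - (‖inner 𝕜 x y‖ / (‖x‖ * ‖y‖)) ^ 2 ≤ 2 * (1 - RCLike.re (inner 𝕜 x y)) := by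
  set a := ‖inner 𝕜 x y‖
  have ha : 0 ≤ a := norm_nonneg _
  have hcs : a ≤ ‖x‖ * ‖y‖ := norm_inner_le_norm x y
  have hre : RCLike.re (inner 𝕜 x y) ≤ a := RCLike.re_le_norm _
  have ha_le : a ≤ a / (‖x‖ * ‖y‖) := by
    rcases (by positivity : 0 ≤ ‖x‖ * ‖y‖).eq_or_lt with hn | hn
    · rw [← hn] at hcs ⊢
      simp [le_antisymm hcs ha]
    · exact le_div_self ha hn (mul_le_one₀ hx (norm_nonneg y) hy)
  nlinarith [pow_le_pow_left₀ ha ha_le 2, sq_nonneg (1 - a)]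

section Columns

variable {Nt Nsb : ℕ}

theorem colNorm_eq_norm (W : Matrix (Fin Nt) (Fin Nsb) ℂ) (l : Fin Nsb) :
    colNorm W l = ‖WithLp.toLp 2 (Wᵀ l)‖ := by
  simp [colNorm, EuclideanSpace.norm_eq, Complex.sq_norm]

theorem colInner_eq_inner (W W' : Matrix (Fin Nt) (Fin Nsb) ℂ) (l : Fin Nsb) :
    colInner W W' l = inner ℂ (WithLp.toLp 2 (Wᵀ l)) (WithLp.toLp 2 (W'ᵀ l)) := by
  simp [colInner, PiLp.inner_apply, mul_comm]

theorem sum_colInner_eq_trace (W W' : Matrix (Fin Nt) (Fin Nsb) ℂ) :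
    ∑ l, colInner W W' l = trace (Wᴴ * W') := by
  simp [colInner, trace, Matrix.mul_apply]

theorem re_colInner_self (W : Matrix (Fin Nt) (Fin Nsb) ℂ) (l : Fin Nsb) :
    (colInner W W l).re = colNorm W l ^ 2 := by
  rw [colInner_eq_inner, colNorm_eq_norm, ← inner_self_eq_norm_sq (𝕜 := ℂ), RCLike.re_to_complex]

theorem one_sub_sgcs_le {W W' : Matrix (Fin Nt) (Fin Nsb) ℂ} (hNsb : 0 < Nsb)
    (hW : ∀ l, colNorm W l = 1) (hW' : ∀ l, colNorm W' l ≤ 1) :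
    1 - sgcs W W' ≤ 2 / Nsb * (trace (Wᴴ * (W - W'))).re := by
  have hcol (l : Fin Nsb) :
      1 - (‖colInner W W' l‖ / (colNorm W l * colNorm W' l)) ^ 2 ≤
        2 * ((colInner W W l).re - (colInner W W' l).re) := by
    have h := one_sub_sq_norm_inner_div_le (𝕜 := ℂ) (x := WithLp.toLp 2 (Wᵀ l))
      (y := WithLp.toLp 2 (W'ᵀ l)) (by rw [← colNorm_eq_norm, hW])
      (by rw [← colNorm_eq_norm]; exact hW' l)
    rw [← colInner_eq_inner, ← colNorm_eq_norm, ← colNorm_eq_norm, RCLike.re_to_complex] at h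
    rw [re_colInner_self, hW, one_pow]
    rwa [hW] at h
  have hN : (Nsb : ℝ) ≠ 0 := by positivity
  have hsgcs : 1 - sgcs W W' =
      1 / Nsb * ∑ l, (1 - (‖colInner W W' l‖ / (colNorm W l * colNorm W' l)) ^ 2) := by
    simp only [sgcs, sum_sub_distrib, sum_const, card_univ, Fintype.card_fin, nsmul_eq_mul]
    field_simp
  calc 1 - sgcs W W' ≤ 1 / Nsb * ∑ l, 2 * ((colInner W W l).re - (colInner W W' l).re) := by
        rw [hsgcs]; gcongr with l; exact hcol l
    _ = 2 / Nsb * (trace (Wᴴ * (W - W'))).re := by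
        rw [Matrix.mul_sub, trace_sub, ← sum_colInner_eq_trace, ← sum_colInner_eq_trace,
          Complex.sub_re, Complex.re_sum, Complex.re_sum, ← sum_sub_distrib, ← mul_sum]
        ring

end Columns

theorem re_trace_conjTranspose_mul_sub_mask_le {m n : Type*} [Fintype m] [Fintype n]
    [DecidableEq m] [DecidableEq n] {σ : ℝ} {E E' : Matrix m n ℂ} {𝒮 : Finset m} {ℱ : Finset n}
    (hE0 : ∀ v l, ((v ∈ 𝒮 ∧ l ∉ ℱ) ∨ (v ∉ 𝒮 ∧ l ∈ ℱ)) → E v l = 0)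
    (hEσ : ∀ v l, v ∉ 𝒮 → l ∉ ℱ → ‖E v l‖ ≤ σ)
    (hE' : ∀ v l, E' v l = if v ∈ 𝒮 ∧ l ∈ ℱ then E v l else 0) :
    (trace (Eᴴ * (E - E'))).re ≤ (Fintype.card m - #𝒮) * (Fintype.card n - #ℱ) * σ ^ 2 := by
  have hentry (v : m) (l : n) :
      (star (E v l) * (E - E') v l).re ≤ if v ∈ 𝒮ᶜ ∧ l ∈ ℱᶜ then σ ^ 2 else 0 := by
    have hsq : (star (E v l) * E v l).re = ‖E v l‖ ^ 2 := by
      rw [Complex.star_def, Complex.conj_mul']; norm_cast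
    by_cases hv : v ∈ 𝒮 <;> by_cases hl : l ∈ ℱ
    · simp [hE', hv, hl]
    · simp [hE', hv, hl, hE0 v l (.inl ⟨hv, hl⟩)]
    · simp [hE', hv, hl, hE0 v l (.inr ⟨hv, hl⟩)]
    · have hsub : (E - E') v l = E v l := by simp [hE', hv, hl]
      rw [hsub, hsq, if_pos (by simp [hv, hl])]
      exact pow_le_pow_left₀ (norm_nonneg _) (hEσ v l hv hl) 2
  calc (trace (Eᴴ * (E - E'))).re = ∑ l, ∑ v, (star (E v l) * (E - E') v l).re := by
        simp only [trace, Matrix.diag, Matrix.mul_apply, conjTranspose_apply, Complex.re_sum]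
    _ ≤ ∑ l, ∑ v, if v ∈ 𝒮ᶜ ∧ l ∈ ℱᶜ then σ ^ 2 else 0 := by gcongr with l _ v _; exact hentry v l
    _ = (Fintype.card m - #𝒮) * (Fintype.card n - #ℱ) * σ ^ 2 := by
        simp only [ite_and, sum_ite_irrel, sum_ite_mem, univ_inter, sum_const_zero, sum_const,
          nsmul_eq_mul, card_compl, Nat.cast_sub (card_le_univ _)]
        ring

theorem sgcs_dominant_approximation_general
    {Nt Nsb : ℕ} (hNsb : 0 < Nsb)
    (σ : ℝ)
    (S : Matrix (Fin Nt) (Fin Nt) ℂ) (F : Matrix (Fin Nsb) (Fin Nsb) ℂ)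
    (hS : Sᴴ * S = 1 ∧ S * Sᴴ = 1) (hF : Fᴴ * F = 1 ∧ F * Fᴴ = 1)
    (E : Matrix (Fin Nt) (Fin Nsb) ℂ)
    (W : Matrix (Fin Nt) (Fin Nsb) ℂ) (hW : W = S * E * Fᴴ)
    (𝒮 : Finset (Fin Nt)) (ℱ : Finset (Fin Nsb))
    (hE0 : ∀ v l, ((v ∈ 𝒮 ∧ l ∉ ℱ) ∨ (v ∉ 𝒮 ∧ l ∈ ℱ)) → E v l = 0)
    (hEσ : ∀ v l, v ∉ 𝒮 → l ∉ ℱ → ‖E v l‖ ≤ σ)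
    (E' : Matrix (Fin Nt) (Fin Nsb) ℂ)
    (hE' : ∀ v l, E' v l = if v ∈ 𝒮 ∧ l ∈ ℱ then E v l else 0)
    (What : Matrix (Fin Nt) (Fin Nsb) ℂ) (hWhat : What = S * E' * Fᴴ)
    (hWcol : ∀ l, colNorm W l = 1)
    (hWhatcol : ∀ l, colNorm What l ≠ 0 ∧ colNorm What l ≤ 1) :
    1 - sgcs W What ≤
      (2 / (Nsb : ℝ)) * ((Nt : ℝ) - 𝒮.card) * ((Nsb : ℝ) - ℱ.card) * σ ^ 2 := by
  have hdiff : W - What = S * (E - E') * Fᴴ := by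
    rw [hW, hWhat, Matrix.mul_sub, Matrix.sub_mul]
  have hmask := re_trace_conjTranspose_mul_sub_mask_le hE0 hEσ hE'
  rw [Fintype.card_fin, Fintype.card_fin] at hmask
  calc 1 - sgcs W What ≤ 2 / Nsb * (trace (Wᴴ * (W - What))).re :=
        one_sub_sgcs_le hNsb hWcol fun l => (hWhatcol l).2
    _ = 2 / Nsb * (trace (Eᴴ * (E - E'))).re := by
        rw [hdiff, hW, trace_conjTranspose_mul_of_isometry_sandwich hS.1 hF.1]
    _ ≤ 2 / Nsb * (((Nt : ℝ) - #𝒮) * ((Nsb : ℝ) - #ℱ) * σ ^ 2) := by gcongr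
    _ = _ := by ring

theorem sgcs_dominant_approximation
    {Nt Nsb : ℕ} (hNsb : 0 < Nsb)
    (σ : ℝ) (hσ : 0 < σ)
    (S : Matrix (Fin Nt) (Fin Nt) ℂ) (F : Matrix (Fin Nsb) (Fin Nsb) ℂ)
    (hS : Sᴴ * S = 1 ∧ S * Sᴴ = 1) (hF : Fᴴ * F = 1 ∧ F * Fᴴ = 1)
    (E : Matrix (Fin Nt) (Fin Nsb) ℂ)
    (W : Matrix (Fin Nt) (Fin Nsb) ℂ) (hW : W = S * E * Fᴴ)
    (𝒮 : Finset (Fin Nt)) (ℱ : Finset (Fin Nsb))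
    (hE0 : ∀ v l, ((v ∈ 𝒮 ∧ l ∉ ℱ) ∨ (v ∉ 𝒮 ∧ l ∈ ℱ)) → E v l = 0)
    (hEσ : ∀ v l, v ∉ 𝒮 → l ∉ ℱ → ‖E v l‖ ≤ σ)
    (E' : Matrix (Fin Nt) (Fin Nsb) ℂ)
    (hE' : ∀ v l, E' v l = if v ∈ 𝒮 ∧ l ∈ ℱ then E v l else 0)
    (What : Matrix (Fin Nt) (Fin Nsb) ℂ) (hWhat : What = S * E' * Fᴴ)
    (hWcol : ∀ l, colNorm W l = 1)
    (hWhatcol : ∀ l, colNorm What l ≠ 0 ∧ colNorm What l ≤ 1) :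
    1 - sgcs W What ≤
      (2 / (Nsb : ℝ)) * ((Nt : ℝ) - 𝒮.card) * ((Nsb : ℝ) - ℱ.card) * σ ^ 2 :=
  sgcs_dominant_approximation_general hNsb σ S F hS hF E W hW 𝒮 ℱ hE0 hEσ E' hE' What hWhat hWcol
    hWhatcol
end

section
/- Let Θ, A, B be random variables on a probability space taking values in finite types, and let g be a function of two arguments such that for every value a of A the map b ↦ g(a,b) is injective. Assume that B is independent of A, and that B and A are conditionally independent given Θ (i.e., for every θ with P(Θ=θ) > 0 and all values a, b: P(B=b, A=a | Θ=θ) = P(B=b | Θ=θ)·P(A=a | Θ=θ)). Let T = g(A,B). Then the conditional mutual information satisfies I(Θ ; T | A) = H(Θ) − H(Θ | B). -/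
open BigOperators

/-- Probability that the finitely-valued random variable `X` equals `x`,
under the probability mass function `p` on the finite sample space `Ω`. -/
def prEq {Ω α : Type*} [Fintype Ω] [DecidableEq α]
    (p : Ω → ℝ) (X : Ω → α) (x : α) : ℝ :=
  ∑ ω ∈ Finset.univ.filter (fun ω => X ω = x), p ω

/-- Shannon entropy `H(X)` of a finitely-valued random variable
(with the convention `0 · log 0 = 0`, valid since `Real.log 0 = 0`). -/
noncomputable def entropy {Ω α : Type*} [Fintype Ω] [Fintype α] [DecidableEq α]
    (p : Ω → ℝ) (X : Ω → α) : ℝ :=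
  -∑ x, prEq p X x * Real.log (prEq p X x)

/-- Conditional entropy `H(X | Y) = H(X, Y) - H(Y)`. -/
noncomputable def condEntropy {Ω α β : Type*} [Fintype Ω]
    [Fintype α] [DecidableEq α] [Fintype β] [DecidableEq β]
    (p : Ω → ℝ) (X : Ω → α) (Y : Ω → β) : ℝ :=
  entropy p (fun ω => (X ω, Y ω)) - entropy p Y

/-- Mutual information `I(X ; Y) = H(X) - H(X | Y)`. -/
noncomputable def mutualInfo {Ω α β : Type*} [Fintype Ω]
    [Fintype α] [DecidableEq α] [Fintype β] [DecidableEq β]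
    (p : Ω → ℝ) (X : Ω → α) (Y : Ω → β) : ℝ :=
  entropy p X - condEntropy p X Y

/-- Conditional mutual information `I(X ; Y | Z) = H(X | Z) - H(X | Y, Z)`. -/
noncomputable def condMutualInfo {Ω α β γ : Type*} [Fintype Ω]
    [Fintype α] [DecidableEq α] [Fintype β] [DecidableEq β] [Fintype γ] [DecidableEq γ]
    (p : Ω → ℝ) (X : Ω → α) (Y : Ω → β) (Z : Ω → γ) : ℝ :=
  condEntropy p X Z - condEntropy p X (fun ω => (Y ω, Z ω))

/-! Since `b ↦ g a b` is injective, conditioning on `(T, A)` is the same as conditioning on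
`(B, A)`, so `I(Θ; T | A) = H(Θ, A) - H(A) - H(Θ, B, A) + H(B, A)`. Independence gives
`H(B, A) = H(B) + H(A)` and conditional independence given `Θ` gives
`H(B, A, Θ) + H(Θ) = H(B, Θ) + H(A, Θ)`; substituting leaves `H(Θ) - (H(Θ, B) - H(B))`.
Both entropy identities, the second fibre by fibre over `Θ`, come from one computation: if
`p(x, y) = f(x) g(y) / c` where `f` and `g` both sum to `c`, then
`∑ p log p = ∑ f log f + ∑ g log g - c log c`. -/

open Function Real

lemma injective_apply_pair_of_injective {α β γ : Type*} {g : α → β → γ}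
    (hg : ∀ a, Injective (g a)) : Injective fun x : β × α => (g x.2 x.1, x.2) := by
  rintro ⟨b, a⟩ ⟨b', a'⟩ h
  simp only [Prod.mk.injEq] at h
  obtain ⟨hb, rfl⟩ := h
  rw [hg a hb]

section prEq

variable {Ω α β : Type*} [Fintype Ω] (p : Ω → ℝ)

lemma prEq_nonneg [DecidableEq α] (hp : ∀ ω, 0 ≤ p ω) (X : Ω → α) (x : α) :
    0 ≤ prEq p X x :=
  Finset.sum_nonneg fun ω _ => hp ω

lemma sum_prEq [Fintype α] [DecidableEq α] (X : Ω → α) : ∑ x, prEq p X x = ∑ ω, p ω :=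
  Finset.sum_fiberwise _ _ _

lemma sum_prEq_pair_snd [Fintype α] [DecidableEq α] [DecidableEq β]
    (X : Ω → α) (Y : Ω → β) (y : β) :
    ∑ x, prEq p (fun ω => (X ω, Y ω)) (x, y) = prEq p Y y := by
  rw [prEq, ← Finset.sum_fiberwise _ X p]
  refine Finset.sum_congr rfl fun x _ => Finset.sum_congr ?_ fun _ _ => rfl
  ext ω
  simp [and_comm]

lemma prEq_pair_le_snd [Fintype α] [DecidableEq α] [DecidableEq β] (hp : ∀ ω, 0 ≤ p ω)
    (X : Ω → α) (Y : Ω → β) (x : α) (y : β) :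
    prEq p (fun ω => (X ω, Y ω)) (x, y) ≤ prEq p Y y := by
  rw [← sum_prEq_pair_snd p X Y y]
  exact Finset.single_le_sum (fun x' _ => prEq_nonneg p hp _ (x', y)) (Finset.mem_univ x)

lemma prEq_pair_eq_zero_of_prEq_snd_eq_zero [Fintype α] [DecidableEq α] [DecidableEq β]
    (hp : ∀ ω, 0 ≤ p ω) (X : Ω → α) (Y : Ω → β) {y : β} (hy : prEq p Y y = 0) (x : α) :
    prEq p (fun ω => (X ω, Y ω)) (x, y) = 0 :=
  le_antisymm (hy ▸ prEq_pair_le_snd p hp X Y x y) (prEq_nonneg p hp _ _)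

lemma prEq_comp_apply [DecidableEq α] [DecidableEq β] (X : Ω → α) {f : α → β}
    (hf : Injective f) (x : α) : prEq p (fun ω => f (X ω)) (f x) = prEq p X x := by
  simp only [prEq, hf.eq_iff]

lemma prEq_comp_of_notMem_range [DecidableEq β] (X : Ω → α) {f : α → β} {y : β}
    (hy : y ∉ Set.range f) : prEq p (fun ω => f (X ω)) y = 0 :=
  Finset.sum_eq_zero fun ω hω => absurd ⟨X ω, (Finset.mem_filter.1 hω).2⟩ hy

end prEq

lemma sum_sum_mul_log_mul_div {α β : Type*} [Fintype α] [Fintype β]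
    {f : α → ℝ} {g : β → ℝ} {c : ℝ} (hc : c ≠ 0) (hf : ∑ a, f a = c) (hg : ∑ b, g b = c) :
    ∑ a, ∑ b, f a * g b / c * log (f a * g b / c) =
      ∑ a, f a * log (f a) + ∑ b, g b * log (g b) - c * log c := by
  have term : ∀ a b, f a * g b / c * log (f a * g b / c) =
      g b / c * (f a * log (f a)) + f a / c * (g b * log (g b)) -
        f a * g b / c ^ 2 * (c * log c) := by
    intro a b
    rcases eq_or_ne (f a) 0 with ha | ha
    · simp [ha]
    rcases eq_or_ne (g b) 0 with hb | hb
    · simp [hb]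
    rw [log_div (mul_ne_zero ha hb) hc, log_mul ha hb]
    field_simp
  simp only [term, Finset.sum_sub_distrib, Finset.sum_add_distrib, ← Finset.sum_div,
    ← Finset.sum_mul, ← Finset.mul_sum]
  rw [hf, hg]
  field_simp

section entropy

variable {Ω α β γ : Type*} [Fintype Ω] (p : Ω → ℝ)
  [Fintype α] [DecidableEq α] [Fintype β] [DecidableEq β] [Fintype γ] [DecidableEq γ]

lemma entropy_pair_eq_neg_sum_sum (X : Ω → α) (Y : Ω → β) :
    entropy p (fun ω => (X ω, Y ω)) =
      -∑ y, ∑ x, prEq p (fun ω => (X ω, Y ω)) (x, y) *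
        log (prEq p (fun ω => (X ω, Y ω)) (x, y)) := by
  rw [entropy, Fintype.sum_prod_type, Finset.sum_comm]

lemma entropy_comp_of_injective (X : Ω → α) {f : α → β} (hf : Injective f) :
    entropy p (fun ω => f (X ω)) = entropy p X := by
  rw [entropy, entropy, neg_inj]
  refine (Fintype.sum_of_injective f hf _ _ (fun y hy => ?_) fun x => ?_).symm
  · simp [prEq_comp_of_notMem_range p X hy]
  · rw [prEq_comp_apply p X hf]

lemma entropy_pair_comm (X : Ω → α) (Y : Ω → β) :
    entropy p (fun ω => (X ω, Y ω)) = entropy p (fun ω => (Y ω, X ω)) :=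
  (entropy_comp_of_injective p _ Prod.swap_injective).symm

lemma condEntropy_comp_of_injective (X : Ω → α) (Y : Ω → β) {f : β → γ}
    (hf : Injective f) :
    condEntropy p X (fun ω => f (Y ω)) = condEntropy p X Y := by
  rw [condEntropy, condEntropy, entropy_comp_of_injective p Y hf]
  congr 1
  exact entropy_comp_of_injective p (fun ω => (X ω, Y ω)) (f := fun z => (z.1, f z.2))
    (injective_id.prodMap hf)

lemma entropy_pair_of_indep (hp1 : ∑ ω, p ω = 1) (X : Ω → α) (Y : Ω → β)
    (h : ∀ x y, prEq p (fun ω => (X ω, Y ω)) (x, y) = prEq p X x * prEq p Y y) :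
    entropy p (fun ω => (X ω, Y ω)) = entropy p X + entropy p Y := by
  have h' : ∀ x y,
      prEq p (fun ω => (X ω, Y ω)) (x, y) = prEq p X x * prEq p Y y / 1 := by
    simpa using h
  rw [entropy, entropy, entropy, Fintype.sum_prod_type]
  simp only [h']
  rw [sum_sum_mul_log_mul_div one_ne_zero (by rw [sum_prEq, hp1]) (by rw [sum_prEq, hp1]),
    log_one, mul_zero, sub_zero]
  ring

end entropy

section condIndep

variable {Ω α β γ : Type*} [Fintype Ω] (p : Ω → ℝ)
  [Fintype α] [DecidableEq α] [Fintype β] [DecidableEq β] [DecidableEq γ]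
  (X : Ω → α) (Y : Ω → β) (Z : Ω → γ)

lemma sum_sum_mul_log_prEq_of_condIndep (hp : ∀ ω, 0 ≤ p ω) (z : γ)
    (h : 0 < prEq p Z z → ∀ x y, prEq p (fun ω => (X ω, Y ω, Z ω)) (x, y, z) / prEq p Z z =
      (prEq p (fun ω => (X ω, Z ω)) (x, z) / prEq p Z z) *
        (prEq p (fun ω => (Y ω, Z ω)) (y, z) / prEq p Z z)) :
    ∑ y, ∑ x, prEq p (fun ω => (X ω, Y ω, Z ω)) (x, y, z) *
        log (prEq p (fun ω => (X ω, Y ω, Z ω)) (x, y, z)) =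
      ∑ y, prEq p (fun ω => (Y ω, Z ω)) (y, z) *
          log (prEq p (fun ω => (Y ω, Z ω)) (y, z)) +
        ∑ x, prEq p (fun ω => (X ω, Z ω)) (x, z) *
          log (prEq p (fun ω => (X ω, Z ω)) (x, z)) -
        prEq p Z z * log (prEq p Z z) := by
  rcases (prEq_nonneg p hp Z z).lt_or_eq with hz | hz
  · have hz' := hz.ne'
    have hmul : ∀ x y, prEq p (fun ω => (X ω, Y ω, Z ω)) (x, y, z) =
        prEq p (fun ω => (Y ω, Z ω)) (y, z) * prEq p (fun ω => (X ω, Z ω)) (x, z) /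
          prEq p Z z := fun x y => by
      rw [← div_mul_cancel₀ (prEq p _ (x, y, z)) hz', h hz x y]
      field_simp
    simp only [hmul]
    exact sum_sum_mul_log_mul_div hz' (sum_prEq_pair_snd p Y Z z) (sum_prEq_pair_snd p X Z z)
  · have hXZ := prEq_pair_eq_zero_of_prEq_snd_eq_zero p hp X Z hz.symm
    have hYZ := prEq_pair_eq_zero_of_prEq_snd_eq_zero p hp Y Z hz.symm
    have hXYZ : ∀ x y, prEq p (fun ω => (X ω, Y ω, Z ω)) (x, y, z) = 0 := fun x y =>
      prEq_pair_eq_zero_of_prEq_snd_eq_zero p hp X (fun ω => (Y ω, Z ω)) (hYZ y) x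
    simp [hXYZ, hXZ, hYZ, ← hz]

lemma entropy_triple_add_entropy_of_condIndep [Fintype γ] (hp : ∀ ω, 0 ≤ p ω)
    (h : ∀ z, 0 < prEq p Z z → ∀ x y,
      prEq p (fun ω => (X ω, Y ω, Z ω)) (x, y, z) / prEq p Z z =
        (prEq p (fun ω => (X ω, Z ω)) (x, z) / prEq p Z z) *
          (prEq p (fun ω => (Y ω, Z ω)) (y, z) / prEq p Z z)) :
    entropy p (fun ω => (X ω, Y ω, Z ω)) + entropy p Z =
      entropy p (fun ω => (X ω, Z ω)) + entropy p (fun ω => (Y ω, Z ω)) := by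
  rw [entropy_pair_eq_neg_sum_sum p X (fun ω => (Y ω, Z ω)), Fintype.sum_prod_type,
    Finset.sum_comm, entropy_pair_eq_neg_sum_sum p X Z, entropy_pair_eq_neg_sum_sum p Y Z,
    entropy]
  simp only [sum_sum_mul_log_prEq_of_condIndep p X Y Z hp _ (h _), Finset.sum_sub_distrib,
    Finset.sum_add_distrib]
  ring

end condIndep

theorem condMutualInfo_new_task
    {Ω θty aty bty τty : Type*} [Fintype Ω]
    [Fintype θty] [DecidableEq θty] [Fintype aty] [DecidableEq aty]
    [Fintype bty] [DecidableEq bty] [Fintype τty] [DecidableEq τty]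
    (p : Ω → ℝ) (hp : ∀ ω, 0 ≤ p ω) (hp1 : ∑ ω, p ω = 1)
    (Θ : Ω → θty) (A : Ω → aty) (B : Ω → bty)
    (g : aty → bty → τty) (hg : ∀ a, Function.Injective (g a))
    (hindep : ∀ a b,
      prEq p (fun ω => (B ω, A ω)) (b, a) = prEq p B b * prEq p A a)
    (hcondindep : ∀ θ, 0 < prEq p Θ θ → ∀ a b,
      prEq p (fun ω => (B ω, A ω, Θ ω)) (b, a, θ) / prEq p Θ θ =
        (prEq p (fun ω => (B ω, Θ ω)) (b, θ) / prEq p Θ θ) *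
          (prEq p (fun ω => (A ω, Θ ω)) (a, θ) / prEq p Θ θ))
    (T : Ω → τty) (hT : ∀ ω, T ω = g (A ω) (B ω)) :
    condMutualInfo p Θ T A = entropy p Θ - condEntropy p Θ B := by
  have hBA : entropy p (fun ω => (B ω, A ω)) = entropy p B + entropy p A :=
    entropy_pair_of_indep p hp1 B A fun b a => hindep a b
  have hBAΘ := entropy_triple_add_entropy_of_condIndep p B A Θ hp fun θ hθ b a =>
    hcondindep θ hθ a b
  have hTA :
      condEntropy p Θ (fun ω => (T ω, A ω)) = condEntropy p Θ (fun ω => (B ω, A ω)) := by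
    simp only [hT]
    exact condEntropy_comp_of_injective p Θ (fun ω => (B ω, A ω))
      (f := fun x => (g x.2 x.1, x.2)) (injective_apply_pair_of_injective hg)
  have hΘBA : entropy p (fun ω => (Θ ω, B ω, A ω)) = entropy p (fun ω => (B ω, A ω, Θ ω)) :=
    entropy_comp_of_injective p (fun ω => (B ω, A ω, Θ ω))
      (f := fun x => (x.2.2, x.1, x.2.1))
      ((Equiv.prodAssoc _ _ _).symm.trans (Equiv.prodComm _ _)).injective
  rw [condMutualInfo, hTA, condEntropy, condEntropy, condEntropy, hΘBA, hBA,
    entropy_pair_comm p Θ A, entropy_pair_comm p Θ B]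
  linarith
end
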